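/- Let Q be the convex quadrilateral with vertices (0,0), (0,u), (s,t), (v,w), where s,t,u,v,w satisfy the standard conditions, and let ℓ be the line through the midpoints M1 = (v/2, (w+u)/2) and M2 = (s/2, t/2) of the diagonals of Q. Then: (i) ℓ contains the diagonal from (0,0) to (s,t) if and only if u = (vt − ws)/s; and (ii) ℓ contains the diagonal from (0,u) to (v,w) if and only if (2v − s)u + ws − vt = 0. -/

import Mathlib

/-!
A line through the midpoint of a segment contains the segment as soon as it contains one
endpoint, since the point reflection in the midpoint swaps the endpoints. The line `ℓ` passes
through the midpoints of both diagonals, so each diagonal lies on `ℓ` iff its first endpoint,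
`(0,0)` resp. `(0,u)`, is collinear with the two midpoints; each collinearity determinant is
a quarter of the stated polynomial condition.
-/

noncomputable section

abbrev Pt : Type := EuclideanSpace ℝ (Fin 2)

/-- The point of the Euclidean plane with coordinates `(x, y)`. -/
def pt (x y : ℝ) : Pt := (WithLp.equiv 2 (Fin 2 → ℝ)).symm ![x, y]

theorem AffineSubspace.mem_of_midpoint_mem {k V P : Type*} [Ring k] [Invertible (2 : k)]
    [AddCommGroup V] [Module k V] [AddTorsor V P] {L : AffineSubspace k P} {A B : P}
    (hM : midpoint k A B ∈ L) (hA : A ∈ L) : B ∈ L := by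
  rw [← AffineEquiv.pointReflection_midpoint_left (R := k) A B, AffineEquiv.pointReflection_apply]
  exact L.vadd_mem_of_mem_direction (L.vsub_mem_direction hM hA) hM

theorem AffineSubspace.segment_subset_iff_left_mem {𝕜 E : Type*} [Field 𝕜] [LinearOrder 𝕜]
    [IsStrictOrderedRing 𝕜] [AddCommGroup E] [Module 𝕜 E] {L : AffineSubspace 𝕜 E} {A B : E}
    (hM : midpoint 𝕜 A B ∈ L) : segment 𝕜 A B ⊆ L ↔ A ∈ L :=
  ⟨fun h => h (left_mem_segment 𝕜 A B),
    fun hA => L.convex.segment_subset hA (L.mem_of_midpoint_mem hM hA)⟩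

@[simp] lemma pt_apply_zero (x y : ℝ) : pt x y 0 = x := rfl

@[simp] lemma pt_apply_one (x y : ℝ) : pt x y 1 = y := rfl

lemma pt_ext {p q : Pt} (h0 : p 0 = q 0) (h1 : p 1 = q 1) : p = q := by
  ext i; fin_cases i <;> assumption

lemma midpoint_pt (a b c d : ℝ) :
    midpoint ℝ (pt a b) (pt c d) = pt ((a + c) / 2) ((b + d) / 2) := by
  apply pt_ext <;> simp [midpoint_eq_smul_add] <;> ring

lemma pt_mem_line_iff {a b c d x y : ℝ} (h : a ≠ c ∨ b ≠ d) :
    pt x y ∈ line[ℝ, pt a b, pt c d] ↔ (x - a) * (d - b) = (y - b) * (c - a) := by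
  rw [← vsub_vadd (pt x y) (pt a b), vadd_left_mem_affineSpan_pair]
  constructor
  · rintro ⟨r, hr⟩
    have h0 := congrArg (· 0) hr
    have h1 := congrArg (· 1) hr
    simp only [vsub_eq_sub, PiLp.smul_apply, PiLp.sub_apply, smul_eq_mul, pt_apply_zero,
      pt_apply_one] at h0 h1
    linear_combination (c - a) * h1 - (d - b) * h0
  · intro hxy
    rcases h with hac | hbd
    · have hca : c - a ≠ 0 := sub_ne_zero.mpr hac.symm
      refine ⟨(x - a) / (c - a), pt_ext ?_ ?_⟩
      · simp [div_mul_cancel₀ _ hca]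
      · simp only [vsub_eq_sub, PiLp.smul_apply, PiLp.sub_apply, pt_apply_one, smul_eq_mul]
        field_simp
        linear_combination hxy
    · have hdb : d - b ≠ 0 := sub_ne_zero.mpr hbd.symm
      refine ⟨(y - b) / (d - b), pt_ext ?_ ?_⟩
      · simp only [vsub_eq_sub, PiLp.smul_apply, PiLp.sub_apply, pt_apply_zero, smul_eq_mul]
        field_simp
        linear_combination -hxy
      · simp [div_mul_cancel₀ _ hdb]

theorem midpoint_diagonal_characterization_general (s t u v w : ℝ)
    (hs : 0 < s) (hp2 : s ≠ v) :
    let ℓ : AffineSubspace ℝ Pt :=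
      affineSpan ℝ ({pt (v / 2) ((w + u) / 2), pt (s / 2) (t / 2)} : Set Pt)
    (segment ℝ (pt 0 0) (pt s t) ⊆ (ℓ : Set Pt) ↔ u = (v * t - w * s) / s) ∧
    (segment ℝ (pt 0 u) (pt v w) ⊆ (ℓ : Set Pt) ↔ (2 * v - s) * u + w * s - v * t = 0) := by
  intro ℓ
  have hM₁ : midpoint ℝ (pt 0 u) (pt v w) ∈ ℓ := by
    rw [midpoint_pt]; convert left_mem_affineSpan_pair ℝ _ _ using 2 <;> ring
  have hM₂ : midpoint ℝ (pt 0 0) (pt s t) ∈ ℓ := by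
    rw [midpoint_pt]; convert right_mem_affineSpan_pair ℝ _ _ using 2 <;> ring
  have hℓ : v / 2 ≠ s / 2 ∨ (w + u) / 2 ≠ t / 2 := Or.inl (by contrapose! hp2; linarith)
  rw [AffineSubspace.segment_subset_iff_left_mem hM₂,
    AffineSubspace.segment_subset_iff_left_mem hM₁, pt_mem_line_iff hℓ, pt_mem_line_iff hℓ,
    eq_div_iff hs.ne']
  exact ⟨⟨fun h => by linear_combination 4 * h, fun h => by linear_combination h / 4⟩,
    ⟨fun h => by linear_combination 4 * h, fun h => by linear_combination h / 4⟩⟩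

/-- For the quadrilateral with vertices `(0,0), (0,u), (s,t), (v,w)` (standard
conditions), the line `ℓ` through the midpoints of the diagonals contains the
diagonal from `(0,0)` to `(s,t)` iff `u = (vt − ws)/s`, and contains the diagonal
from `(0,u)` to `(v,w)` iff `(2v − s)u + ws − vt = 0`. -/
theorem midpoint_diagonal_characterization (s t u v w : ℝ)
    (hs : 0 < s) (hv : 0 < v) (hu : 0 < u) (htw : w < t)
    (hc1 : 0 < v * (t - u) + (u - w) * s) (hc2 : 0 < v * t - w * s)
    (hp1 : w * s - v * (t - u) ≠ 0) (hp2 : s ≠ v) :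
    let ℓ : AffineSubspace ℝ Pt :=
      affineSpan ℝ ({pt (v / 2) ((w + u) / 2), pt (s / 2) (t / 2)} : Set Pt)
    (segment ℝ (pt 0 0) (pt s t) ⊆ (ℓ : Set Pt) ↔ u = (v * t - w * s) / s) ∧
    (segment ℝ (pt 0 u) (pt v w) ⊆ (ℓ : Set Pt) ↔ (2 * v - s) * u + w * s - v * t = 0) :=
  midpoint_diagonal_characterization_general s t u v w hs hp2

end
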